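/- The Appell function satisfies the difference equation κ(y, x + m + τ; τ) = e(y)·κ(y, x; τ) + θ(x, τ) for every integer m. -/

import Mathlib

open Complex

noncomputable def e (w : ℂ) : ℂ := Complex.exp (2 * Real.pi * Complex.I * w)

noncomputable def theta (z τ : ℂ) : ℂ := ∑' n : ℤ, e (τ * n ^ 2 / 2 + n * z)

noncomputable def thetaD (z τ : ℂ) : ℂ := deriv (fun w => theta w τ) z

noncomputable def al (τ z : ℂ) : ℝ := z.im / τ.im

noncomputable def sgn (t : ℝ) : ℂ := if 0 < t then 1 else -1

/-- term of the Kronecker-Eisenstein series, indexed by `(m, n) : ℤ × ℤ`. -/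
noncomputable def fterm (τ z₁ z₂ : ℂ) (p : ℤ × ℤ) : ℂ :=
  if 0 < (al τ z₁ + p.1) * (al τ z₂ + p.2) then
    sgn (al τ z₁ + p.1) * e (τ * p.1 * p.2 + p.2 * z₁ + p.1 * z₂)
  else 0

noncomputable def fKr (z₁ z₂ τ : ℂ) : ℂ := ∑' p : ℤ × ℤ, fterm τ z₁ z₂ p

noncomputable def kappa (y x τ : ℂ) : ℂ :=
  ∑' n : ℤ, e (τ * n ^ 2 / 2 + n * x) / (e (n * τ) - e y)

/-- term of the trapezoid series `g`, indexed by `(m, n) : ℤ × ℤ`. -/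
noncomputable def gterm (τ z₁ z₂ : ℂ) (p : ℤ × ℤ) : ℂ :=
  if 0 < ((p.2 : ℝ) + al τ z₁) * ((p.1 : ℝ) + al τ z₂) then
    sgn ((p.1 : ℝ) + al τ z₂) *
      e (((p.2 : ℂ) + p.1 / 2) * p.1 * τ + p.1 * z₁ + ((p.1 : ℂ) + p.2) * z₂)
  else 0

noncomputable def gF (z₁ z₂ τ : ℂ) : ℂ := ∑' p : ℤ × ℤ, gterm τ z₁ z₂ p

noncomputable def g0 (z₁ z₂ τ : ℂ) : ℂ :=
  ∑' m : ℤ, e (τ * m ^ 2 / 2 + m * (z₁ + z₂)) / (1 - e (m * τ + z₂))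

/-- term of the series `h₀`, indexed by `(m, n) : ℤ × ℤ`. -/
noncomputable def hterm (τ x : ℂ) (p : ℤ × ℤ) : ℂ :=
  if 0 < ((p.1 : ℝ) + 1 / 2) * ((p.2 : ℝ) + 1 / 2) then
    sgn ((p.1 : ℝ) + 1 / 2) *
      e (τ / 2 * (2 * p.1 ^ 2 + 4 * p.1 * p.2 + p.2 ^ 2) + p.2 * x)
  else 0

noncomputable def h0 (τ x : ℂ) : ℂ := ∑' p : ℤ × ℤ, hterm τ x p

def notInt (t : ℝ) : Prop := ∀ k : ℤ, t ≠ (k : ℝ)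

lemma e_add (a b : ℂ) : e (a + b) = e a * e b := by
  simp [e, mul_add, Complex.exp_add]

lemma e_int (n : ℤ) : e n = 1 := by
  rw [e, show (2 * (Real.pi:ℂ) * Complex.I * n) = n * (2 * Real.pi * Complex.I) by ring,
    Complex.exp_int_mul_two_pi_mul_I]

lemma norm_e (w : ℂ) : ‖e w‖ = Real.exp (-(2 * Real.pi * w.im)) := by
  rw [e, Complex.norm_exp]
  congr 1
  simp [Complex.mul_re, Complex.mul_im]

lemma e_eq_jacobi (τ x : ℂ) (n : ℤ) :
    e (τ * n ^ 2 / 2 + n * x) = jacobiTheta₂_term n x τ := by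
  rw [e, jacobiTheta₂_term]
  congr 1
  ring

-- lower bound for the denominator
lemma denom_lb (τ : ℂ) (hτ : 0 < τ.im) (y : ℂ) (hy : notInt (al τ y)) :
    ∃ c : ℝ, 0 < c ∧ ∀ n : ℤ, c ≤ ‖e (n * τ) - e y‖ := by
  set a : ℝ := al τ y with ha
  set k : ℤ := ⌊a⌋ with hk
  have hlt1 : (k : ℝ) < a := lt_of_le_of_ne (Int.floor_le a) (fun h => hy k h.symm)
  have hlt2 : a < (k : ℝ) + 1 := Int.lt_floor_add_one a
  have hb : y.im = a * τ.im := by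
    rw [ha]; unfold al; rw [div_mul_cancel₀ _ hτ.ne']
  set c1 : ℝ := Real.exp (-(2 * Real.pi * (k * τ.im))) - Real.exp (-(2 * Real.pi * y.im))
  set c2 : ℝ := Real.exp (-(2 * Real.pi * y.im)) - Real.exp (-(2 * Real.pi * ((k + 1) * τ.im)))
  have hpi : (0:ℝ) < 2 * Real.pi := by positivity
  have hc1 : 0 < c1 := by
    have : -(2 * Real.pi * y.im) < -(2 * Real.pi * (k * τ.im)) := by
      rw [hb]
      have h' := mul_lt_mul_of_pos_left (mul_lt_mul_of_pos_right hlt1 hτ) hpi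
      linarith
    simpa [c1, sub_pos] using Real.exp_lt_exp.mpr this
  have hc2 : 0 < c2 := by
    have : -(2 * Real.pi * ((k + 1) * τ.im)) < -(2 * Real.pi * y.im) := by
      rw [hb]
      have h' := mul_lt_mul_of_pos_left (mul_lt_mul_of_pos_right hlt2 hτ) hpi
      linarith
    simpa [c2, sub_pos] using Real.exp_lt_exp.mpr this
  refine ⟨min c1 c2, lt_min hc1 hc2, fun n => ?_⟩
  have hny : ‖e ((n:ℂ) * τ)‖ = Real.exp (-(2 * Real.pi * (n * τ.im))) := by
    rw [norm_e]; norm_num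
  rcases le_or_gt n k with h | h
  · calc min c1 c2 ≤ c1 := min_le_left _ _
      _ ≤ ‖e ((n:ℂ) * τ)‖ - ‖e y‖ := by
          rw [hny, norm_e]
          have : Real.exp (-(2 * Real.pi * (k * τ.im))) ≤
              Real.exp (-(2 * Real.pi * ((n:ℝ) * τ.im))) := by
            apply Real.exp_le_exp.mpr
            have h0 : (n:ℝ) ≤ k := by exact_mod_cast h
            have h' := mul_le_mul_of_nonneg_left (mul_le_mul_of_nonneg_right h0 hτ.le) hpi.le
            linarith
          simp only [c1]; linarith
      _ ≤ ‖e ((n:ℂ) * τ) - e y‖ := by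
          have := norm_sub_norm_le (e ((n:ℂ) * τ)) (e y)
          linarith
  · calc min c1 c2 ≤ c2 := min_le_right _ _
      _ ≤ ‖e y‖ - ‖e ((n:ℂ) * τ)‖ := by
          rw [hny, norm_e]
          have : Real.exp (-(2 * Real.pi * ((n:ℝ) * τ.im))) ≤
              Real.exp (-(2 * Real.pi * ((k + 1 : ℝ) * τ.im))) := by
            apply Real.exp_le_exp.mpr
            have h0 : ((k:ℝ) + 1) ≤ (n:ℝ) := by exact_mod_cast h
            have h' := mul_le_mul_of_nonneg_left (mul_le_mul_of_nonneg_right h0 hτ.le) hpi.le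
            linarith
          simp only [c2]; push_cast at this ⊢; linarith
      _ ≤ ‖e ((n:ℂ) * τ) - e y‖ := by
          have := norm_sub_norm_le (e y) (e ((n:ℂ) * τ))
          rw [norm_sub_rev] at this
          linarith

theorem stmt10 (τ : ℂ) (hτ : 0 < τ.im) (y x : ℂ) (hy : notInt (al τ y)) (m : ℤ) :
    kappa y (x + m + τ) τ = e y * kappa y x τ + theta x τ := by
  obtain ⟨c, hc, hcle⟩ := denom_lb τ hτ y hy
  have hne : ∀ n : ℤ, e ((n:ℂ) * τ) - e y ≠ 0 := by
    intro n
    intro h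
    have := hcle n
    rw [h, norm_zero] at this
    linarith
  have hθ : Summable (fun n : ℤ => e (τ * n ^ 2 / 2 + n * x)) := by
    have := (summable_jacobiTheta₂_term_iff x τ).mpr hτ
    exact this.congr (fun n => (e_eq_jacobi τ x n).symm)
  have hκ : Summable (fun n : ℤ => e (τ * n ^ 2 / 2 + n * x) / (e (n * τ) - e y)) := by
    apply Summable.of_norm_bounded (g := fun n : ℤ => ‖e (τ * n ^ 2 / 2 + n * x)‖ * c⁻¹)
      (hθ.norm.mul_right _)
    intro n
    rw [norm_div, div_eq_mul_inv]
    exact mul_le_mul_of_nonneg_left (inv_anti₀ hc (hcle n)) (norm_nonneg _)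
  have key : ∀ n : ℤ, e (τ * n ^ 2 / 2 + n * (x + m + τ)) / (e (n * τ) - e y)
      = e y * (e (τ * n ^ 2 / 2 + n * x) / (e (n * τ) - e y))
        + e (τ * n ^ 2 / 2 + n * x) := by
    intro n
    have h1 : (τ * n ^ 2 / 2 + n * (x + m + τ)) =
        (τ * n ^ 2 / 2 + n * x) + ((n * m : ℤ) : ℂ) + n * τ := by push_cast; ring
    rw [h1, e_add, e_add, e_int]
    field_simp [hne n]
    have hd : e (τ * (n:ℂ)) - e y ≠ 0 := by rw [mul_comm]; exact hne n
    generalize e (τ * (n:ℂ)) = B at hd ⊢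
    generalize e y = C at hd ⊢
    rw [div_add_one hd, add_sub_cancel, mul_div_assoc]
  unfold kappa theta
  calc (∑' n : ℤ, e (τ * n ^ 2 / 2 + n * (x + m + τ)) / (e (n * τ) - e y))
      = ∑' n : ℤ, (e y * (e (τ * n ^ 2 / 2 + n * x) / (e (n * τ) - e y))
          + e (τ * n ^ 2 / 2 + n * x)) := tsum_congr key
    _ = (∑' n : ℤ, e y * (e (τ * n ^ 2 / 2 + n * x) / (e (n * τ) - e y)))
          + ∑' n : ℤ, e (τ * n ^ 2 / 2 + n * x) := Summable.tsum_add (hκ.mul_left _) hθ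
    _ = e y * (∑' n : ℤ, e (τ * n ^ 2 / 2 + n * x) / (e (n * τ) - e y))
          + ∑' n : ℤ, e (τ * n ^ 2 / 2 + n * x) := by rw [tsum_mul_left]
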